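/- Let ω be a subcategory of an abelian category C closed under extensions and cokernels of monomorphisms, such that check(ω) is closed under extensions, cokernels of monomorphisms and kernels of epimorphisms. For a short exact sequence 0→L→M→N→0 in check(ω) with ω-codim L = l, ω-codim M = m, ω-codim N = n: if l=0 then m=n; if m<l then l=n+1; if n<m then l=m; and always m≤max{l,n}, l≤max{m,n}+1, n≤max{l,m}+1. -/
import Mathlib


open CategoryTheory CategoryTheory.Limits Opposite

noncomputable section

universe v u

variable (C : Type u) [Category.{v} C] [Abelian C] [EnoughProjectives C] [EnoughInjectives C]

/-- The `i`-th Ext group from `X` to `Y` vanishes. -/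
def extZero (i : ℕ) (X Y : C) : Prop :=
  Limits.IsZero (((Ext ℤ C i).obj (op X)).obj Y)

variable {C}

/-- A class of objects is self-orthogonal if all positive-degree Ext groups
between its members vanish. -/
def SelfOrth (ω : Set C) : Prop :=
  ∀ W ∈ ω, ∀ W' ∈ ω, ∀ i ≥ 1, extZero C i W W'

/-- The right orthogonal class `ω^⊥`. -/
def rightPerp (ω : Set C) : Set C :=
  {Y | ∀ W ∈ ω, ∀ i ≥ 1, extZero C i W Y}

/-- The left orthogonal class `^⊥ω`. -/
def leftPerp (ω : Set C) : Set C :=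
  {Y | ∀ W ∈ ω, ∀ i ≥ 1, extZero C i Y W}

/-- There exists a short exact sequence `0 → X → Y → Z → 0`. -/
def SES (X Y Z : C) : Prop :=
  ∃ (f : X ⟶ Y) (g : Y ⟶ Z) (w : f ≫ g = 0), (ShortComplex.mk f g w).ShortExact

/-- `coresol ω n` is the class of objects admitting an `ω`-coresolution
`0 → X → W⁰ → ⋯ → Wⁿ → 0` of length `n`. -/
def coresol (ω : Set C) : ℕ → Set C
  | 0 => {X | ∃ W ∈ ω, Nonempty (X ≅ W)}
  | n + 1 => {X | ∃ W ∈ ω, ∃ X', SES X W X' ∧ X' ∈ coresol ω n}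

/-- `check(ω)`: objects with a finite `ω`-coresolution. -/
def checkCat (ω : Set C) : Set C := ⋃ n, coresol ω n

/-- `resol ω n` is the class of objects admitting an `ω`-resolution
`0 → Wₙ → ⋯ → W₀ → X → 0` of length `n`. -/
def resol (ω : Set C) : ℕ → Set C
  | 0 => {X | ∃ W ∈ ω, Nonempty (X ≅ W)}
  | n + 1 => {X | ∃ W ∈ ω, ∃ X', SES X' W X ∧ X' ∈ resol ω n}

/-- `hat(ω)`: objects with a finite `ω`-resolution. -/
def hatCat (ω : Set C) : Set C := ⋃ n, resol ω n

/-- `_ωX`: objects admitting an exact proper `ω`-resolution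
`⋯ → W₁ → W₀ → A → 0` with all syzygies in `ω^⊥`. -/
def omX (ω : Set C) : Set C :=
  {A | ∃ K W : ℕ → C, K 0 = A ∧ (∀ i, W i ∈ ω) ∧
    (∀ i, K (i + 1) ∈ rightPerp ω) ∧ ∀ i, SES (K (i + 1)) (W i) (K i)}

/-- `X_ω`: objects admitting an exact coproper `ω`-coresolution
`0 → A → W⁰ → W¹ → ⋯` with all cosyzygies in `^⊥ω`. -/
def Xom (ω : Set C) : Set C :=
  {A | ∃ K W : ℕ → C, K 0 = A ∧ (∀ i, W i ∈ ω) ∧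
    (∀ i, K (i + 1) ∈ leftPerp ω) ∧ ∀ i, SES (K i) (W i) (K (i + 1))}

/-- `Pres^n_D(ω)`: objects `M` with an exact sequence
`0 → X → Tₙ → ⋯ → T₁ → M → 0`, `Tᵢ ∈ ω`, `X ∈ D`. -/
def Pres (D ω : Set C) : ℕ → Set C
  | 0 => D
  | n + 1 => {M | ∃ T ∈ ω, ∃ X, SES X T M ∧ X ∈ Pres D ω n}

/-- `ω`-codimension: the least length of an `ω`-coresolution. -/
def codim (ω : Set C) (M : C) : ℕ := sInf {n | M ∈ coresol ω n}

/-- `I` is a relative injective cogenerator of `Y`. -/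
def RelInjCogen (I Y : Set C) : Prop :=
  I ⊆ Y ∧ (∀ X ∈ I, ∀ Z ∈ Y, ∀ i ≥ 1, extZero C i Z X) ∧
    ∀ Z ∈ Y, ∃ I₀ ∈ I, ∃ Z', Z' ∈ Y ∧ SES Z I₀ Z'

/-- The direct sum of `n + 1` copies of `T`. -/
def nsum (T : C) : ℕ → C
  | 0 => T
  | n + 1 => T ⊞ nsum T n

/-- `add T`: direct summands of finite direct sums of copies of `T`. -/
def addOf (T : C) : Set C :=
  {X | ∃ (n : ℕ) (Y : C), Nonempty ((X ⊞ Y) ≅ nsum T n)}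

variable (ω : Set C)

section AuxSES

open ZeroObject

lemma SES.of_iso {X X' Y Y' Z Z' : C} (eX : X ≅ X') (eY : Y ≅ Y') (eZ : Z ≅ Z')
    (h : SES X Y Z) : SES X' Y' Z' := by
  obtain ⟨f, g, w, hse⟩ := h
  refine ⟨eX.inv ≫ f ≫ eY.hom, eY.inv ≫ g ≫ eZ.hom, by simp [reassoc_of% w], ?_⟩
  exact ShortComplex.shortExact_of_iso
    (ShortComplex.isoMk eX eY eZ (by simp) (by simp)) hse

lemma ses_to_zero {X Y : C} (e : X ≅ Y) : SES X Y (0 : C) := by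
  refine ⟨e.hom, 0, comp_zero, ?_⟩
  have hm : Mono e.hom := inferInstance
  have he : Epi (0 : Y ⟶ (0 : C)) := ⟨fun u v _ => (Limits.isZero_zero C).eq_of_src u v⟩
  refine ShortComplex.ShortExact.mk' ?_ hm he
  rw [ShortComplex.exact_iff_exact_up_to_refinements]
  intro A a _
  exact ⟨A, 𝟙 A, inferInstance, a ≫ e.inv, by simp⟩

lemma pushout_inl_ses {Q Y₀ W₀ V : C} (u : Q ⟶ Y₀) {v : Q ⟶ W₀} {q : W₀ ⟶ V} {w : v ≫ q = 0}
    (h2 : (ShortComplex.mk v q w).ShortExact) : SES Y₀ (pushout u v) V := by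
  have hv : Mono v := h2.mono_f
  have hq : Epi q := h2.epi_g
  have hcond : u ≫ (0 : Y₀ ⟶ V) = v ≫ q := by rw [comp_zero, w]
  refine ⟨pushout.inl u v, pushout.desc 0 q hcond, pushout.inl_desc _ _ _, ?_⟩
  have hmono : Mono (pushout.inl u v) := inferInstance
  have hepi : Epi (pushout.desc (0 : Y₀ ⟶ V) q hcond) :=
    epi_of_epi_fac (pushout.inr_desc _ _ _)
  refine ShortComplex.ShortExact.mk' ?_ hmono hepi
  rw [ShortComplex.exact_iff_exact_up_to_refinements]
  intro A a ha
  have he : Epi (biprod.desc (pushout.inl u v) (pushout.inr u v)) := by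
    constructor
    intro T s t hst
    apply pushout.hom_ext
    · simpa using biprod.inl ≫= hst
    · simpa using biprod.inr ≫= hst
  obtain ⟨A', π, hπ, b, hb⟩ := surjective_up_to_refinements_of_epi
      (biprod.desc (pushout.inl u v) (pushout.inr u v)) a
  have hb' : π ≫ a = (b ≫ biprod.fst) ≫ pushout.inl u v
      + (b ≫ biprod.snd) ≫ pushout.inr u v := by
    rw [hb, biprod.desc_eq, Preadditive.comp_add]
    simp
  have ha' : a ≫ pushout.desc 0 q hcond = 0 := ha
  have hb₂ : (b ≫ biprod.snd) ≫ q = 0 := by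
    have h0' := hb' =≫ pushout.desc 0 q hcond
    simp only [Category.assoc, Preadditive.add_comp, pushout.inl_desc, pushout.inr_desc,
      comp_zero, zero_add] at h0'
    rw [Category.assoc, ← h0', ha', comp_zero]
  obtain ⟨A'', π', hπ', x, hx⟩ := h2.exact.exact_up_to_refinements (b ≫ biprod.snd) hb₂
  refine ⟨A'', π' ≫ π, epi_comp _ _, π' ≫ (b ≫ biprod.fst) + x ≫ u, ?_⟩
  show (π' ≫ π) ≫ a = (π' ≫ (b ≫ biprod.fst) + x ≫ u) ≫ pushout.inl u v
  rw [Category.assoc, hb', Preadditive.comp_add, Preadditive.add_comp]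
  congr 1
  · rw [← Category.assoc]
  · rw [← Category.assoc, hx, Category.assoc, ← pushout.condition, ← Category.assoc]

lemma pushout_inr_ses {X Y Z W : C} {f : X ⟶ Y} {g : Y ⟶ Z} {w : f ≫ g = 0}
    (h1 : (ShortComplex.mk f g w).ShortExact) (m : Y ⟶ W) [Mono m] :
    SES X W (pushout g m) := by
  have hg : Epi g := h1.epi_g
  have hf : Mono f := h1.mono_f
  refine ⟨f ≫ m, pushout.inr g m, ?_, ?_⟩
  · rw [Category.assoc, ← pushout.condition, reassoc_of% w, zero_comp]
  · have hmono : Mono (f ≫ m) := mono_comp f m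
    have hepi : Epi (pushout.inr g m) := inferInstance
    refine ShortComplex.ShortExact.mk' ?_ hmono hepi
    rw [ShortComplex.exact_iff_exact_up_to_refinements]
    intro A a ha
    have ha' : a ≫ pushout.inr g m = 0 := ha
    have hT : (ShortComplex.mk (biprod.lift g (-m))
        (biprod.desc (pushout.inl g m) (pushout.inr g m))
        (by simp [pushout.condition])).Exact :=
      ShortComplex.exact_of_g_is_cokernel _
        ((IsPushout.of_hasPushout g m).isColimitCokernelCofork)
    obtain ⟨A', π, hπ, yb, hyb⟩ := hT.exact_up_to_refinements (biprod.lift 0 a)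
      (by simp [ha'])
    have h1' : yb ≫ g = 0 := by
      have := hyb =≫ biprod.fst
      simpa using this.symm
    have h2' : π ≫ a = -(yb ≫ m) := by
      have h := hyb =≫ biprod.snd
      simpa using h
    obtain ⟨A'', π', hπ', x, hx⟩ := h1.exact.exact_up_to_refinements yb h1'
    refine ⟨A'', π' ≫ π, epi_comp _ _, -x, ?_⟩
    have hx' : π' ≫ yb = x ≫ f := hx
    show (π' ≫ π) ≫ a = (-x) ≫ (f ≫ m)
    calc (π' ≫ π) ≫ a = π' ≫ (π ≫ a) := Category.assoc π' π a
    _ = π' ≫ (-(yb ≫ m)) := by rw [h2']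
    _ = -((π' ≫ yb) ≫ m) := by simp
    _ = -((x ≫ f) ≫ m) := by rw [hx']
    _ = (-x) ≫ (f ≫ m) := by simp

lemma ses_pushA {X Y Z W V : C} (h1 : SES X Y Z) (h2 : SES X W V) :
    ∃ P : C, SES Y P V ∧ SES W P Z := by
  obtain ⟨f, g, w1, hse1⟩ := h1
  obtain ⟨f', g', w2, hse2⟩ := h2
  refine ⟨pushout f f', pushout_inl_ses f hse2, ?_⟩
  exact SES.of_iso (Iso.refl W) (pushoutSymmetry f' f) (Iso.refl Z)
    (pushout_inl_ses f' hse1)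

lemma ses_pushB {X Y Z W V : C} (h1 : SES X Y Z) (h2 : SES Y W V) :
    ∃ P : C, SES Z P V ∧ SES X W P := by
  obtain ⟨f, g, w1, hse1⟩ := h1
  obtain ⟨m, q, w2, hse2⟩ := h2
  have : Mono m := hse2.mono_f
  exact ⟨pushout g m, pushout_inl_ses g hse2, pushout_inr_ses hse1 m⟩

end AuxSES
section AuxCoresol

open ZeroObject

lemma coresol_of_iso : ∀ (n : ℕ) {X Y : C}, (X ≅ Y) → Y ∈ coresol ω n → X ∈ coresol ω n := by
  intro n
  cases n with
  | zero =>
    rintro X Y e ⟨W, hW, ⟨e'⟩⟩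
    exact ⟨W, hW, ⟨e.trans e'⟩⟩
  | succ n =>
    rintro X Y e ⟨W, hW, X', hs, hX'⟩
    exact ⟨W, hW, X', SES.of_iso e.symm (Iso.refl W) (Iso.refl X') hs, hX'⟩

lemma omega_zero_mem (hcok : ∀ X Y Z : C, SES X Y Z → X ∈ ω → Y ∈ ω → Z ∈ ω)
    {W : C} (hW : W ∈ ω) : (0 : C) ∈ ω :=
  hcok W W 0 (ses_to_zero (Iso.refl W)) hW hW

lemma zero_coresol (h0 : (0 : C) ∈ ω) : ∀ n, (0 : C) ∈ coresol ω n
  | 0 => ⟨0, h0, ⟨Iso.refl 0⟩⟩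
  | n + 1 => ⟨0, h0, 0, ses_to_zero (Iso.refl 0), zero_coresol h0 n⟩

lemma coresol_succ_incl (h0 : (0 : C) ∈ ω) :
    ∀ n, coresol ω n ⊆ coresol ω (n + 1) := by
  intro n
  induction n with
  | zero =>
    rintro X ⟨W, hW, ⟨e⟩⟩
    exact ⟨W, hW, 0, ses_to_zero e, zero_coresol ω h0 0⟩
  | succ n ih =>
    rintro X ⟨W, hW, X', hs, hX'⟩
    exact ⟨W, hW, X', hs, ih hX'⟩

lemma coresol_le (h0 : (0 : C) ∈ ω) {m n : ℕ} (h : m ≤ n) :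
    coresol ω m ⊆ coresol ω n := by
  induction n with
  | zero => rw [Nat.le_zero.mp h]
  | succ n ih =>
    rcases Nat.lt_or_ge m (n + 1) with h' | h'
    · exact fun X hX => coresol_succ_incl ω h0 n (ih (Nat.lt_succ_iff.mp h') hX)
    · rw [Nat.le_antisymm h h']

lemma mem_coresol_zero {W : C} (hW : W ∈ ω) : W ∈ coresol ω 0 := ⟨W, hW, ⟨Iso.refl W⟩⟩

lemma ext0 (hext : ∀ X Y Z : C, SES X Y Z → X ∈ ω → Z ∈ ω → Y ∈ ω)
    {X Y Z : C} (hs : SES X Y Z) (hX : X ∈ coresol ω 0) (hZ : Z ∈ coresol ω 0) :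
    Y ∈ coresol ω 0 := by
  obtain ⟨W1, h1, ⟨e1⟩⟩ := hX
  obtain ⟨W2, h2, ⟨e2⟩⟩ := hZ
  exact ⟨Y, hext W1 Y W2 (SES.of_iso e1 (Iso.refl Y) e2 hs) h1 h2, ⟨Iso.refl Y⟩⟩

lemma cok0 (hcok : ∀ X Y Z : C, SES X Y Z → X ∈ ω → Y ∈ ω → Z ∈ ω)
    {X Y Z : C} (hs : SES X Y Z) (hX : X ∈ coresol ω 0) (hY : Y ∈ coresol ω 0) :
    Z ∈ coresol ω 0 := by
  obtain ⟨W1, h1, ⟨e1⟩⟩ := hX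
  obtain ⟨W2, h2, ⟨e2⟩⟩ := hY
  exact ⟨Z, hcok W1 W2 Z (SES.of_iso e1 e2 (Iso.refl Z) hs) h1 h2, ⟨Iso.refl Z⟩⟩

lemma lemR (hext : ∀ X Y Z : C, SES X Y Z → X ∈ ω → Z ∈ ω → Y ∈ ω)
    (hcok : ∀ X Y Z : C, SES X Y Z → X ∈ ω → Y ∈ ω → Z ∈ ω)
    (p : ℕ) {X Y Z : C} (hs : SES X Y Z) (hX : X ∈ coresol ω 0)
    (hY : Y ∈ coresol ω p) : Z ∈ coresol ω p := by
  cases p with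
  | zero => exact cok0 ω hcok hs hX hY
  | succ p =>
    obtain ⟨Wy, hWy, Y₁, hsY, hY₁⟩ := hY
    obtain ⟨P, hZP, hXP⟩ := ses_pushB hs hsY
    have hP : P ∈ ω := by
      obtain ⟨W0, hW0, ⟨e0⟩⟩ := hX
      exact hcok W0 Wy P (SES.of_iso e0 (Iso.refl Wy) (Iso.refl P) hXP) hW0 hWy
    exact ⟨P, hP, Y₁, hZP, hY₁⟩

lemma lemEQ (hext : ∀ X Y Z : C, SES X Y Z → X ∈ ω → Z ∈ ω → Y ∈ ω)
    (hcok : ∀ X Y Z : C, SES X Y Z → X ∈ ω → Y ∈ ω → Z ∈ ω)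
    (hcext : ∀ X Y Z : C, SES X Y Z → X ∈ checkCat ω → Z ∈ checkCat ω → Y ∈ checkCat ω)
    (n : ℕ) :
    (∀ {X Y Z : C}, SES X Y Z → X ∈ coresol ω 0 → Z ∈ coresol ω n → Y ∈ coresol ω n) ∧
    (∀ {X Y Z : C}, SES X Y Z → X ∈ coresol ω n → Y ∈ coresol ω 0 →
      Z ∈ coresol ω (n - 1)) := by
  induction n with
  | zero =>
    exact ⟨fun hs hX hZ => ext0 ω hext hs hX hZ, fun hs hX hY => cok0 ω hcok hs hX hY⟩
  | succ n ih =>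
    have hQ : ∀ {X Y Z : C}, SES X Y Z → X ∈ coresol ω (n + 1) → Y ∈ coresol ω 0 →
        Z ∈ coresol ω n := by
      intro X Y Z hs hX hY
      obtain ⟨W0, hW0, X₁, hsX, hX₁⟩ := hX
      obtain ⟨P, hYP, hWP⟩ := ses_pushA hs hsX
      have hP : P ∈ coresol ω n := ih.1 hYP hY hX₁
      exact lemR ω hext hcok n hWP (mem_coresol_zero ω hW0) hP
    refine ⟨?_, fun hs hX hY => hQ hs hX hY⟩
    intro X Y Z hs hX hZ
    have hYc : Y ∈ checkCat ω :=
      hcext X Y Z hs (Set.mem_iUnion.2 ⟨0, hX⟩) (Set.mem_iUnion.2 ⟨n + 1, hZ⟩)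
    obtain ⟨k, hYk⟩ := Set.mem_iUnion.1 hYc
    have h0 : (0 : C) ∈ ω := by
      obtain ⟨W0, hW0, _⟩ := hX
      exact omega_zero_mem ω hcok hW0
    cases k with
    | zero => exact coresol_le ω h0 (Nat.zero_le _) hYk
    | succ k =>
      obtain ⟨Wy, hWy, Y₁, hsY, _⟩ := hYk
      obtain ⟨P, hZP, hXP⟩ := ses_pushB hs hsY
      have hP0 : P ∈ coresol ω 0 := cok0 ω hcok hXP hX (mem_coresol_zero ω hWy)
      exact ⟨Wy, hWy, Y₁, hsY, hQ hZP hZ hP0⟩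

lemma lemP1 (hext : ∀ X Y Z : C, SES X Y Z → X ∈ ω → Z ∈ ω → Y ∈ ω)
    (hcok : ∀ X Y Z : C, SES X Y Z → X ∈ ω → Y ∈ ω → Z ∈ ω)
    (hcext : ∀ X Y Z : C, SES X Y Z → X ∈ checkCat ω → Z ∈ checkCat ω → Y ∈ checkCat ω) :
    ∀ (l n : ℕ) {X Y Z : C}, SES X Y Z → X ∈ coresol ω l → Z ∈ coresol ω n →
      Y ∈ coresol ω (max l n) := by
  intro l
  induction l with
  | zero =>
    intro n X Y Z hs hX hZ
    rw [Nat.zero_max]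
    exact (lemEQ ω hext hcok hcext n).1 hs hX hZ
  | succ l ih =>
    intro n X Y Z hs hX hZ
    obtain ⟨W, hW, X₁, hsX, hX₁⟩ := hX
    obtain ⟨P, hYP, hWP⟩ := ses_pushA hs hsX
    have hP : P ∈ coresol ω n := (lemEQ ω hext hcok hcext n).1 hWP (mem_coresol_zero ω hW) hZ
    cases n with
    | zero =>
      rw [Nat.max_zero]
      obtain ⟨Wp, hWp, ⟨ep⟩⟩ := hP
      exact ⟨Wp, hWp, X₁, SES.of_iso (Iso.refl Y) ep (Iso.refl X₁) hYP, hX₁⟩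
    | succ n =>
      obtain ⟨Wp, hWp, P₁, hsP, hP₁⟩ := hP
      obtain ⟨P', hX₁P', hYWp⟩ := ses_pushB hYP hsP
      have hP' : P' ∈ coresol ω (max l n) := ih n hX₁P' hX₁ hP₁
      have hfin : Y ∈ coresol ω (max l n + 1) := ⟨Wp, hWp, P', hYWp, hP'⟩
      have : max (l + 1) (n + 1) = max l n + 1 := Nat.succ_max_succ l n
      rwa [this]

lemma lemK (hext : ∀ X Y Z : C, SES X Y Z → X ∈ ω → Z ∈ ω → Y ∈ ω)
    (hcok : ∀ X Y Z : C, SES X Y Z → X ∈ ω → Y ∈ ω → Z ∈ ω)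
    (hcext : ∀ X Y Z : C, SES X Y Z → X ∈ checkCat ω → Z ∈ checkCat ω → Y ∈ checkCat ω)
    (p c : ℕ) {X Y Z : C} (hs : SES X Y Z)
    (hY : Y ∈ coresol ω p) (hZ : Z ∈ coresol ω c) : X ∈ coresol ω (max p (c + 1)) := by
  cases p with
  | zero =>
    rw [Nat.zero_max]
    obtain ⟨Wy, hWy, ⟨e⟩⟩ := hY
    exact ⟨Wy, hWy, Z, SES.of_iso (Iso.refl X) e (Iso.refl Z) hs, hZ⟩
  | succ p =>
    obtain ⟨Wy, hWy, Y₁, hsY, hY₁⟩ := hY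
    obtain ⟨P, hZP, hXP⟩ := ses_pushB hs hsY
    have hP : P ∈ coresol ω (max c p) := lemP1 ω hext hcok hcext c p hZP hZ hY₁
    have hfin : X ∈ coresol ω (max c p + 1) := ⟨Wy, hWy, P, hXP, hP⟩
    have : max (p + 1) (c + 1) = max c p + 1 := by
      rw [Nat.succ_max_succ, Nat.max_comm]
    rwa [this]

lemma lemP3 (hext : ∀ X Y Z : C, SES X Y Z → X ∈ ω → Z ∈ ω → Y ∈ ω)
    (hcok : ∀ X Y Z : C, SES X Y Z → X ∈ ω → Y ∈ ω → Z ∈ ω)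
    (hcext : ∀ X Y Z : C, SES X Y Z → X ∈ checkCat ω → Z ∈ checkCat ω → Y ∈ checkCat ω)
    (l m : ℕ) {X Y Z : C} (hs : SES X Y Z)
    (hX : X ∈ coresol ω l) (hY : Y ∈ coresol ω m) : Z ∈ coresol ω (max m (l - 1)) := by
  cases l with
  | zero =>
    have h0 : (0 : C) ∈ ω := by
      obtain ⟨W0, hW0, _⟩ := hX
      exact omega_zero_mem ω hcok hW0
    exact coresol_le ω h0 (Nat.le_max_left _ _) (lemR ω hext hcok m hs hX hY)
  | succ l =>
    obtain ⟨W, hW, X₁, hsX, hX₁⟩ := hX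
    obtain ⟨P, hYP, hWP⟩ := ses_pushA hs hsX
    have hP : P ∈ coresol ω (max m l) := lemP1 ω hext hcok hcext m l hYP hY hX₁
    exact lemR ω hext hcok _ hWP (mem_coresol_zero ω hW) hP

end AuxCoresol
theorem stmt10
    (hext : ∀ X Y Z : C, SES X Y Z → X ∈ ω → Z ∈ ω → Y ∈ ω)
    (hcok : ∀ X Y Z : C, SES X Y Z → X ∈ ω → Y ∈ ω → Z ∈ ω)
    (hcext : ∀ X Y Z : C, SES X Y Z → X ∈ checkCat ω → Z ∈ checkCat ω → Y ∈ checkCat ω)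
    (hccok : ∀ X Y Z : C, SES X Y Z → X ∈ checkCat ω → Y ∈ checkCat ω → Z ∈ checkCat ω)
    (hcker : ∀ X Y Z : C, SES X Y Z → Y ∈ checkCat ω → Z ∈ checkCat ω → X ∈ checkCat ω)
    (L M N : C) (hse : SES L M N)
    (hL : L ∈ checkCat ω) (hM : M ∈ checkCat ω) (hN : N ∈ checkCat ω) :
    (codim ω L = 0 → codim ω M = codim ω N) ∧
    (codim ω M < codim ω L → codim ω L = codim ω N + 1) ∧
    (codim ω N < codim ω M → codim ω L = codim ω M) ∧
    codim ω M ≤ max (codim ω L) (codim ω N) ∧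
    codim ω L ≤ max (codim ω M) (codim ω N) + 1 ∧
    codim ω N ≤ max (codim ω L) (codim ω M) + 1 := by
  have hLn : L ∈ coresol ω (codim ω L) := Nat.sInf_mem (Set.mem_iUnion.1 hL)
  have hMn : M ∈ coresol ω (codim ω M) := Nat.sInf_mem (Set.mem_iUnion.1 hM)
  have hNn : N ∈ coresol ω (codim ω N) := Nat.sInf_mem (Set.mem_iUnion.1 hN)
  have hA1 : codim ω M ≤ max (codim ω L) (codim ω N) :=
    Nat.sInf_le (lemP1 ω hext hcok hcext _ _ hse hLn hNn)
  have hA2 : codim ω L ≤ max (codim ω M) (codim ω N + 1) :=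
    Nat.sInf_le (lemK ω hext hcok hcext _ _ hse hMn hNn)
  have hA3 : codim ω N ≤ max (codim ω M) (codim ω L - 1) :=
    Nat.sInf_le (lemP3 ω hext hcok hcext _ _ hse hLn hMn)
  refine ⟨?_, ?_, ?_, ?_, ?_, ?_⟩ <;> omega
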